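/- Let X be a uniformly discrete δ-hyperbolic graph of bounded geometry with basepoint e, p ≥ 1, and let f be a concave non-decreasing function with property (C_p). Define φ(x) = ∑_{n≥1} (f(2^n)/2^{n/p}) H(x,2^n), where H(x,m) is the normalized trumpet function. Then φ is Lipschitz: there is a constant L with ‖φ(x)-φ(y)‖_p ≤ L·d(x,y) + L for all x,y ∈ X. -/

import Mathlib

/-- A discrete geodesic of length `L` from `a` to `b`, parametrized by arclength. -/
def IsDGeodesic {X : Type*} [MetricSpace X] (γ : ℕ → X) (a b : X) (L : ℕ) : Prop :=
  (L : ℝ) = dist a b ∧ γ 0 = a ∧ γ L = b ∧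
    ∀ s ≤ L, ∀ t ≤ L, dist (γ s) (γ t) = |(s : ℝ) - (t : ℝ)|

/-- The Rips thin-triangles condition with constant `δ` for discrete geodesics. -/
def DRipsHyperbolic (X : Type*) [MetricSpace X] (δ : ℝ) : Prop :=
  ∀ (a b c : X) (γ₁ γ₂ γ₃ : ℕ → X) (L₁ L₂ L₃ : ℕ),
    IsDGeodesic γ₁ a b L₁ → IsDGeodesic γ₂ b c L₂ → IsDGeodesic γ₃ a c L₃ →
      ∀ s ≤ L₁, ∃ u : X, ((∃ t ≤ L₂, γ₂ t = u) ∨ (∃ t ≤ L₃, γ₃ t = u)) ∧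
        dist (γ₁ s) u ≤ δ

/-- The trumpet set `F_{x,k,n}`: points lying on a segment `g([n,2n])` of some geodesic
`g` from a point `y` with `d(x,y) ≤ k` to the basepoint `e`, excluding `B(e; 3δ)`. -/
def trumpetSet {X : Type*} [MetricSpace X] (e : X) (δ : ℝ) (x : X) (k n : ℕ) : Set X :=
  {z : X | 3 * δ ≤ dist e z ∧
    ∃ (y : X) (γ : ℕ → X) (L t : ℕ), dist x y ≤ (k : ℝ) ∧ IsDGeodesic γ y e L ∧
      t ≤ L ∧ n ≤ t ∧ t ≤ 2 * n ∧ γ t = z}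

/-- The averaged trumpet function `H(x,n) = (1/n) ∑_{k ≤ n/4} F(x,k,n)`. -/
noncomputable def trumpetAvg {X : Type*} [MetricSpace X] (e : X) (δ : ℝ) (x : X) (n : ℕ) :
    X → ℝ :=
  fun z => (1 / (n : ℝ)) *
    ∑ k ∈ Finset.range (n / 4 + 1), Set.indicator (trumpetSet e δ x k n) (fun _ => 1) z

/-- The embedding `φ(x) = ∑_{n ≥ 1} (f(2^n)/2^{n/p}) H(x, 2^n)` of Theorem 3.2, as an
element of `⨁_n ℓ^p(X)` recorded coordinatewise. -/
noncomputable def trumpetEmbedding {X : Type*} [MetricSpace X] (e : X) (δ : ℝ) (p : ℝ)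
    (f : ℕ → ℝ) (x : X) : ℕ → X → ℝ :=
  fun m z =>
    (f (2 ^ (m + 1)) / ((2 : ℝ) ^ (m + 1)) ^ (1 / p)) * trumpetAvg e δ x (2 ^ (m + 1)) z

/-!
By thin triangles, the trumpet set `F(x, n/4, n)` lies within `2δ` of `x` or of a stretch of
length `3n + δ` of a geodesic from `e` to `x`, so by bounded geometry it has `O(n)` points.
Moving `x` by `R` shifts the index `k` of `F(x, k, n)` by `R`, so `|H(x,n) - H(y,n)| ≤ R/n`
pointwise. Hence the `n`-th coordinate of `φ(x) - φ(y)` has `p`-th power norm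
`O(R^p (f(n)/n)^p)`, and `∑_m (f(2^m)/2^m)^p` is dominated blockwise by the series of (C_p).
-/

open Finset Metric

lemma exists_finset_superset_card_le_of_subset_biUnion_closedBall {X : Type*} [MetricSpace X]
    {S : Set X} {C : Finset X} {r : ℝ} {N : ℕ}
    (hN : ∀ a : X, (closedBall a r).Finite ∧ (closedBall a r).ncard ≤ N)
    (hS : S ⊆ ⋃ c ∈ C, closedBall c r) : ∃ T : Finset X, S ⊆ T ∧ T.card ≤ C.card * N := by
  classical
  refine ⟨C.biUnion fun c => (hN c).1.toFinset, fun z hz => ?_, ?_⟩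
  · obtain ⟨c, hc, hzc⟩ := Set.mem_iUnion₂.1 (hS hz)
    simpa using ⟨c, hc, hzc⟩
  · calc _ ≤ ∑ c ∈ C, (hN c).1.toFinset.card := card_biUnion_le
      _ ≤ C.card * N := by
        simpa using sum_le_card_nsmul C _ N fun c _ => by
          rw [← Set.ncard_eq_toFinset_card _ (hN c).1]
          exact (hN c).2

lemma sum_range_shift_le_add {h : ℕ → ℝ} (h0 : ∀ k, 0 ≤ h k) (h1 : ∀ k, h k ≤ 1) (R K : ℕ) :
    ∑ k ∈ range K, h (R + k) ≤ ∑ k ∈ range K, h k + R := by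
  calc ∑ k ∈ range K, h (R + k) ≤ ∑ k ∈ range R, h k + ∑ k ∈ range K, h (R + k) :=
        le_add_of_nonneg_left (sum_nonneg fun k _ => h0 k)
    _ = ∑ k ∈ range K, h k + ∑ k ∈ range R, h (K + k) := by
        rw [← sum_range_add, ← sum_range_add, add_comm]
    _ ≤ ∑ k ∈ range K, h k + R := by
        gcongr
        simpa using sum_le_card_nsmul (range R) _ 1 fun k _ => h1 (K + k)

lemma summable_of_le_mul_sum_Ico {a b : ℕ → ℝ} {u : ℕ → ℕ} {C : ℝ} (ha0 : ∀ i, 0 ≤ a i)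
    (ha : Summable a) (hb0 : ∀ m, 0 ≤ b m) (hC : 0 ≤ C) (hu : Monotone u)
    (hb : ∀ m, b m ≤ C * ∑ i ∈ Ico (u m) (u (m + 1)), a i) : Summable b := by
  refine summable_of_sum_range_le hb0 (c := C * ∑' i, a i) fun M => ?_
  calc ∑ m ∈ range M, b m ≤ ∑ m ∈ range M, C * ∑ i ∈ Ico (u m) (u (m + 1)), a i :=
        sum_le_sum fun m _ => hb m
    _ = C * (∑ i ∈ range (u M), a i - ∑ i ∈ range (u 0), a i) := by
        rw [← mul_sum, ← sum_range_sub (fun m => ∑ i ∈ range (u m), a i)]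
        congr 1
        exact sum_congr rfl fun m _ => sum_Ico_eq_sub _ (hu m.le_succ)
    _ ≤ C * ∑' i, a i := by
        gcongr
        linarith [ha.sum_le_tsum (range (u M)) (fun i _ => ha0 i),
          sum_nonneg fun i (_ : i ∈ range (u 0)) => ha0 i]

lemma rpow_one_div_le_mul_of_le_mul_rpow {S A R p : ℝ} (hp : 0 < p) (hS : 0 ≤ S) (hA : 0 ≤ A)
    (hR : 0 ≤ R) (h : S ≤ A * R ^ p) : S ^ (1 / p) ≤ A ^ (1 / p) * R :=
  calc S ^ (1 / p) ≤ (A * R ^ p) ^ (1 / p) := Real.rpow_le_rpow hS h (by positivity)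
    _ = A ^ (1 / p) * R := by
      rw [Real.mul_rpow hA (by positivity), ← Real.rpow_mul hR, mul_one_div_cancel hp.ne',
        Real.rpow_one]

namespace IsDGeodesic

variable {X : Type*} [MetricSpace X] {γ : ℕ → X} {a b : X} {L s : ℕ}

lemma dist_start (hγ : IsDGeodesic γ a b L) (hs : s ≤ L) : dist (γ s) a = s := by
  rw [← hγ.2.1, hγ.2.2.2 s hs 0 (Nat.zero_le _)]
  simp

lemma dist_end (hγ : IsDGeodesic γ a b L) (hs : s ≤ L) : dist (γ s) b = L - s := by
  rw [← hγ.2.2.1, hγ.2.2.2 s hs L le_rfl, abs_of_nonpos (by simpa using hs)]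
  ring

lemma dist_start_le (hγ : IsDGeodesic γ a b L) (hs : s ≤ L) : dist (γ s) a ≤ dist a b := by
  rw [hγ.dist_start hs, ← hγ.1]
  exact_mod_cast hs

lemma dist_end_le (hγ : IsDGeodesic γ a b L) (hs : s ≤ L) : dist (γ s) b ≤ dist a b := by
  rw [hγ.dist_end hs, ← hγ.1]
  linarith [(s.cast_nonneg : (0 : ℝ) ≤ s)]

end IsDGeodesic

section TrumpetSet

variable {X : Type*} [MetricSpace X] (e : X) (δ : ℝ)

lemma trumpetSet_subset_of_dist_le {x y : X} {k R : ℕ} (n : ℕ) (hxy : dist x y ≤ R) :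
    trumpetSet e δ x k n ⊆ trumpetSet e δ y (R + k) n := by
  rintro z ⟨hez, w, γ, L, t, hxw, hrest⟩
  refine ⟨hez, w, γ, L, t, ?_, hrest⟩
  push_cast
  linarith [dist_triangle_left y w x]

lemma trumpetSet_mono (x : X) (n : ℕ) {k k' : ℕ} (hk : k ≤ k') :
    trumpetSet e δ x k n ⊆ trumpetSet e δ x k' n := by
  rintro z ⟨hez, w, γ, L, t, hxw, hrest⟩
  exact ⟨hez, w, γ, L, t, hxw.trans (by exact_mod_cast hk), hrest⟩

variable {e δ}

open Classical in
/-- Thin triangles on `y, e, x`: a point of `g([n, 2n])` for a geodesic `g` from `y ∈ B(x, k)`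
to `e` is `δ`-close either to the side from `y` to `x`, which forces `n ≤ δ + k` and hence
`k ≤ δ`, or to the geodesic from `e` to `x`, at a distance from `e` between `M - 3n - δ`
and `M = d(e, x)`. -/
lemma trumpetSet_subset_biUnion_closedBall (hhyp : DRipsHyperbolic X δ)
    (hgeo : ∀ a b : X, ∃ (γ : ℕ → X) (L : ℕ), IsDGeodesic γ a b L)
    {x : X} {g : ℕ → X} {M : ℕ} (hg : IsDGeodesic g e x M) {k n : ℕ} (hk : 4 * k ≤ n) :
    trumpetSet e δ x k n ⊆
      ⋃ c ∈ insert x ((Icc (M - (3 * n + ⌈δ⌉₊)) M).image g), closedBall c (2 * δ) := by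
  rintro _ ⟨-, y, γ, L, t, hxy, hγ, htL, hnt, ht2n, rfl⟩
  obtain ⟨γ', L', hγ'⟩ := hgeo y x
  obtain ⟨u, hu, hu_close⟩ := hhyp y e x γ g γ' L M L' hγ hg hγ' t htL
  have hδ : 0 ≤ δ := dist_nonneg.trans hu_close
  have hkn : (k : ℝ) ≤ n := by exact_mod_cast (Nat.le_mul_of_pos_left k four_pos).trans hk
  rcases hu with ⟨s, hsM, rfl⟩ | ⟨s, hsL', rfl⟩
  · refine Set.mem_biUnion
      (mem_insert_of_mem (mem_image_of_mem g (mem_Icc.2 ⟨?_, hsM⟩))) (by simp; linarith)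
    have hs : |(L - t : ℝ) - s| ≤ δ := by
      rw [← hγ.dist_end htL, ← hg.dist_start hsM]
      exact (abs_dist_sub_le _ _ e).trans hu_close
    have hLM : |(L : ℝ) - M| ≤ k := by
      rw [hγ.1, hg.1, dist_comm e x]
      exact (abs_dist_sub_le y x e).trans (by rwa [dist_comm])
    have ht : (t : ℝ) ≤ 2 * n := by exact_mod_cast ht2n
    have : (M : ℝ) ≤ s + (3 * n + ⌈δ⌉₊) := by
      linarith [(abs_le.1 hs).2, (abs_le.1 hLM).1, Nat.le_ceil δ]
    have : M ≤ s + (3 * n + ⌈δ⌉₊) := by exact_mod_cast this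
    omega
  · refine Set.mem_biUnion (mem_insert_self x _) ?_
    have hyx : dist y x ≤ k := by rwa [dist_comm]
    have huy := (hγ'.dist_start_le hsL').trans hyx
    have hux := (hγ'.dist_end_le hsL').trans hyx
    have hny : (n : ℝ) ≤ dist (γ t) y := by
      rw [hγ.dist_start htL]
      exact_mod_cast hnt
    have h4k : 4 * (k : ℝ) ≤ n := by exact_mod_cast hk
    rw [mem_closedBall]
    linarith [dist_triangle (γ t) (γ' s) y, dist_triangle (γ t) (γ' s) x]

end TrumpetSet

section TrumpetAvg

variable {X : Type*} [MetricSpace X] {e : X} {δ : ℝ}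

lemma exists_finset_trumpetSet_subset (hhyp : DRipsHyperbolic X δ)
    (hgeo : ∀ a b : X, ∃ (γ : ℕ → X) (L : ℕ), IsDGeodesic γ a b L) {N : ℕ}
    (hN : ∀ a : X, (closedBall a (2 * δ)).Finite ∧ (closedBall a (2 * δ)).ncard ≤ N)
    (x : X) {n : ℕ} (hn : 1 ≤ n) :
    ∃ T : Finset X, trumpetSet e δ x (n / 4) n ⊆ T ∧ T.card ≤ (⌈δ⌉₊ + 5) * N * n := by
  classical
  obtain ⟨g, M, hg⟩ := hgeo e x
  obtain ⟨T, hT, hcard⟩ := exists_finset_superset_card_le_of_subset_biUnion_closedBall hN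
    (trumpetSet_subset_biUnion_closedBall hhyp hgeo hg (Nat.mul_div_le n 4))
  refine ⟨T, hT, hcard.trans ?_⟩
  have hcenters : (insert x ((Icc (M - (3 * n + ⌈δ⌉₊)) M).image g)).card ≤ (⌈δ⌉₊ + 5) * n :=
    calc _ ≤ ((Icc (M - (3 * n + ⌈δ⌉₊)) M).image g).card + 1 := card_insert_le _ _
      _ ≤ (Icc (M - (3 * n + ⌈δ⌉₊)) M).card + 1 := by gcongr; exact card_image_le
      _ ≤ 3 * n + ⌈δ⌉₊ + 2 := by rw [Nat.card_Icc]; omega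
      _ ≤ (⌈δ⌉₊ + 5) * n := by nlinarith
  calc _ ≤ (⌈δ⌉₊ + 5) * n * N := Nat.mul_le_mul_right N hcenters
    _ = (⌈δ⌉₊ + 5) * N * n := by ring

variable (e δ)

lemma trumpetAvg_eq_zero_of_notMem {x z : X} {n : ℕ} (hz : z ∉ trumpetSet e δ x (n / 4) n) :
    trumpetAvg e δ x n z = 0 :=
  mul_eq_zero_of_right _ <| sum_eq_zero fun _ hk => Set.indicator_of_notMem
    (fun hzk => hz (trumpetSet_mono e δ x n (Nat.lt_succ_iff.1 (mem_range.1 hk)) hzk)) _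

/-- Moving the centre by `R` shifts the indices of the trumpet sets by `R`, and only `R` of the
`n / 4 + 1` summands of `n • H(x, n)` are lost in the shift. -/
lemma trumpetAvg_sub_le {x y : X} {R : ℕ} (hxy : dist x y ≤ R) (n : ℕ) (z : X) :
    trumpetAvg e δ x n z - trumpetAvg e δ y n z ≤ R / n := by
  set h : ℕ → ℝ := fun k => (trumpetSet e δ y k n).indicator (fun _ => 1) z
  have hshift : ∑ k ∈ range (n / 4 + 1), (trumpetSet e δ x k n).indicator (fun _ => 1) z ≤
      ∑ k ∈ range (n / 4 + 1), h (R + k) :=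
    sum_le_sum fun _ _ => Set.indicator_le_indicator_apply_of_subset
      (trumpetSet_subset_of_dist_le e δ n hxy) zero_le_one
  have hloss := sum_range_shift_le_add (h := h)
    (fun _ => Set.indicator_nonneg (fun _ _ => zero_le_one) z)
    (fun _ => Set.indicator_le_self' (fun _ _ => zero_le_one) z) R (n / 4 + 1)
  calc trumpetAvg e δ x n z - trumpetAvg e δ y n z
      = 1 / n * (∑ k ∈ range (n / 4 + 1), (trumpetSet e δ x k n).indicator (fun _ => 1) z -
          ∑ k ∈ range (n / 4 + 1), h k) := by
        simp only [trumpetAvg, h]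
        ring
    _ ≤ 1 / n * R := by gcongr; linarith
    _ = R / n := by ring

lemma abs_trumpetAvg_sub_le {x y : X} {R : ℕ} (hxy : dist x y ≤ R) (n : ℕ) (z : X) :
    |trumpetAvg e δ x n z - trumpetAvg e δ y n z| ≤ R / n :=
  abs_sub_le_iff.2
    ⟨trumpetAvg_sub_le e δ hxy n z, trumpetAvg_sub_le e δ (by rwa [dist_comm]) n z⟩

variable {e δ}

lemma tsum_abs_trumpetAvg_sub_rpow_le (hhyp : DRipsHyperbolic X δ)
    (hgeo : ∀ a b : X, ∃ (γ : ℕ → X) (L : ℕ), IsDGeodesic γ a b L) {N : ℕ}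
    (hN : ∀ a : X, (closedBall a (2 * δ)).Finite ∧ (closedBall a (2 * δ)).ncard ≤ N)
    {p : ℝ} (hp : 0 < p) {x y : X} {R : ℕ} (hxy : dist x y ≤ R) {n : ℕ} (hn : 1 ≤ n) :
    ∑' z, |trumpetAvg e δ x n z - trumpetAvg e δ y n z| ^ p ≤
      2 * (((⌈δ⌉₊ + 5) * N * n : ℕ) : ℝ) * ((R : ℝ) / n) ^ p := by
  classical
  obtain ⟨Tx, hTx, hTx_card⟩ := exists_finset_trumpetSet_subset hhyp hgeo hN x hn
  obtain ⟨Ty, hTy, hTy_card⟩ := exists_finset_trumpetSet_subset hhyp hgeo hN y hn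
  have hsupp : ∀ z ∉ Tx ∪ Ty, |trumpetAvg e δ x n z - trumpetAvg e δ y n z| ^ p = 0 := by
    intro z hz
    rw [mem_union, not_or] at hz
    rw [trumpetAvg_eq_zero_of_notMem e δ fun h => hz.1 (hTx h),
      trumpetAvg_eq_zero_of_notMem e δ fun h => hz.2 (hTy h), sub_zero, abs_zero,
      Real.zero_rpow hp.ne']
  have hcard : ((Tx ∪ Ty).card : ℝ) ≤ 2 * (((⌈δ⌉₊ + 5) * N * n : ℕ) : ℝ) := by
    exact_mod_cast (card_union_le Tx Ty).trans (by omega)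
  rw [tsum_eq_sum hsupp]
  calc _ ≤ ∑ _z ∈ Tx ∪ Ty, ((R : ℝ) / n) ^ p := sum_le_sum fun z _ =>
        Real.rpow_le_rpow (abs_nonneg _) (abs_trumpetAvg_sub_le e δ hxy n z) hp.le
    _ = (Tx ∪ Ty).card * ((R : ℝ) / n) ^ p := by rw [sum_const, nsmul_eq_mul]
    _ ≤ _ := by gcongr

end TrumpetAvg

lemma rpow_div_le_two_rpow_mul_sum_Ico {f : ℕ → ℝ} (hf0 : ∀ n, 0 ≤ f n) (hmono : Monotone f)
    {p : ℝ} (hp : 0 ≤ p) {n : ℕ} (hn : 1 ≤ n) :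
    (f n / n) ^ p ≤
      2 ^ (p + 1) * ∑ i ∈ Ico n (2 * n), 1 / ((i : ℝ) + 1) * (f (i + 1) / ((i : ℝ) + 1)) ^ p := by
  have hn0 : (0 : ℝ) < n := by exact_mod_cast hn
  have hterm : ∀ i ∈ Ico n (2 * n), 1 / (2 * n : ℝ) * (f n / (2 * n)) ^ p ≤
      1 / ((i : ℝ) + 1) * (f (i + 1) / ((i : ℝ) + 1)) ^ p := by
    intro i hi
    have hi2n : (i : ℝ) + 1 ≤ 2 * n := by exact_mod_cast (mem_Ico.1 hi).2
    have hfi : f n ≤ f (i + 1) := hmono (by linarith [(mem_Ico.1 hi).1])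
    have := hf0 n
    have := hf0 (i + 1)
    gcongr
  have hsum := card_nsmul_le_sum _ _ _ hterm
  rw [Nat.card_Ico, two_mul, Nat.add_sub_cancel, nsmul_eq_mul] at hsum
  calc (f n / n) ^ p = 2 ^ (p + 1) * (n * (1 / (2 * n : ℝ) * (f n / (2 * n)) ^ p)) := by
        rw [Real.div_rpow (hf0 n) hn0.le, Real.div_rpow (hf0 n) (by positivity),
          Real.mul_rpow zero_le_two hn0.le, Real.rpow_add two_pos, Real.rpow_one]
        have : (n : ℝ) ^ p ≠ 0 := (Real.rpow_pos_of_pos hn0 p).ne'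
        have : (2 : ℝ) ^ p ≠ 0 := (Real.rpow_pos_of_pos two_pos p).ne'
        field_simp
    _ ≤ _ := by rw [two_mul n]; gcongr

lemma summable_rpow_div_two_pow {f : ℕ → ℝ} (hf0 : ∀ n, 0 ≤ f n) (hmono : Monotone f)
    {p : ℝ} (hp : 0 ≤ p)
    (hCp : Summable (fun n : ℕ => (1 / ((n : ℝ) + 1)) * (f (n + 1) / ((n : ℝ) + 1)) ^ p)) :
    Summable fun m : ℕ => (f (2 ^ (m + 1)) / 2 ^ (m + 1) : ℝ) ^ p := by
  have hf0' : ∀ n : ℕ, ∀ c : ℝ, 0 ≤ c → 0 ≤ (f n / c) ^ p := fun n c hc =>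
    Real.rpow_nonneg (div_nonneg (hf0 n) hc) p
  refine summable_of_le_mul_sum_Ico (C := 2 ^ (p + 1)) (u := fun m => 2 ^ (m + 1))
    (fun i => mul_nonneg (by positivity) (hf0' _ _ (by positivity))) hCp
    (fun m => hf0' _ _ (by positivity)) (by positivity)
    (fun _ _ h => Nat.pow_le_pow_right two_pos (by omega)) fun m => ?_
  have := rpow_div_le_two_rpow_mul_sum_Ico hf0 hmono hp (Nat.one_le_two_pow (n := m + 1))
  rwa [← pow_succ', Nat.cast_pow, Nat.cast_ofNat] at this

lemma tsum_abs_trumpetEmbedding_sub_rpow_le {X : Type*} [MetricSpace X] {e : X} {δ : ℝ}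
    (hhyp : DRipsHyperbolic X δ)
    (hgeo : ∀ a b : X, ∃ (γ : ℕ → X) (L : ℕ), IsDGeodesic γ a b L) {N : ℕ}
    (hN : ∀ a : X, (closedBall a (2 * δ)).Finite ∧ (closedBall a (2 * δ)).ncard ≤ N)
    {p : ℝ} (hp : 0 < p) {f : ℕ → ℝ} (hf0 : ∀ n, 0 ≤ f n) {x y : X} {R : ℕ}
    (hxy : dist x y ≤ R) (m : ℕ) :
    ∑' z, |trumpetEmbedding e δ p f x m z - trumpetEmbedding e δ p f y m z| ^ p ≤
      2 * (((⌈δ⌉₊ + 5) * N : ℕ) : ℝ) * (R : ℝ) ^ p * (f (2 ^ (m + 1)) / 2 ^ (m + 1)) ^ p := by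
  set n : ℕ := 2 ^ (m + 1) with hn_def
  have hn : 1 ≤ n := Nat.one_le_two_pow
  have hn0 : (0 : ℝ) < n := by exact_mod_cast hn
  have hn_cast : (n : ℝ) = 2 ^ (m + 1) := by rw [hn_def, Nat.cast_pow, Nat.cast_ofNat]
  have hscale : (f n / (n : ℝ) ^ (1 / p)) ^ p = f n ^ p / n := by
    rw [Real.div_rpow (hf0 n) (by positivity), ← Real.rpow_mul hn0.le, one_div_mul_cancel hp.ne',
      Real.rpow_one]
  have hcoord : ∀ z, |trumpetEmbedding e δ p f x m z - trumpetEmbedding e δ p f y m z| ^ p =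
      (f n / (n : ℝ) ^ (1 / p)) ^ p * |trumpetAvg e δ x n z - trumpetAvg e δ y n z| ^ p := by
    intro z
    simp only [trumpetEmbedding, ← hn_cast, ← mul_sub, abs_mul]
    rw [Real.mul_rpow (abs_nonneg _) (abs_nonneg _),
      abs_of_nonneg (div_nonneg (hf0 n) (by positivity))]
  rw [tsum_congr hcoord, tsum_mul_left, hscale]
  calc f n ^ p / n * ∑' z, |trumpetAvg e δ x n z - trumpetAvg e δ y n z| ^ p
      ≤ f n ^ p / n * (2 * (((⌈δ⌉₊ + 5) * N * n : ℕ) : ℝ) * ((R : ℝ) / n) ^ p) := by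
        have := hf0 n
        gcongr
        exact tsum_abs_trumpetAvg_sub_rpow_le hhyp hgeo hN hp hxy hn
    _ = _ := by
        rw [← hn_cast, Real.div_rpow (Nat.cast_nonneg R) hn0.le, Real.div_rpow (hf0 n) hn0.le]
        have : (n : ℝ) ^ p ≠ 0 := (Real.rpow_pos_of_pos hn0 p).ne'
        push_cast
        field_simp

theorem stmt14_general {X : Type*} [MetricSpace X] (δ : ℝ) (e : X) (p : ℝ) (hp : 1 ≤ p)
    (hgeodesic : ∀ a b : X, ∃ (γ : ℕ → X) (L : ℕ), IsDGeodesic γ a b L)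
    (hbddgeom : ∀ r : ℝ, ∃ N : ℕ, ∀ a : X,
      (Metric.closedBall a r).Finite ∧ (Metric.closedBall a r).ncard ≤ N)
    (hhyp : DRipsHyperbolic X δ)
    (f : ℕ → ℝ) (hf0 : ∀ n, 0 ≤ f n) (hmono : Monotone f)
    (hCp : Summable (fun n : ℕ => (1 / ((n : ℝ) + 1)) * (f (n + 1) / ((n : ℝ) + 1)) ^ p)) :
    ∃ L : ℝ, 0 < L ∧ ∀ x y : X,
      (∑' (m : ℕ) (z : X),
          |trumpetEmbedding e δ p f x m z - trumpetEmbedding e δ p f y m z| ^ p) ^ (1 / p)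
        ≤ L * dist x y + L := by
  have hp0 : 0 < p := by linarith
  obtain ⟨N, hN⟩ := hbddgeom (2 * δ)
  set b : ℕ → ℝ := fun m => (f (2 ^ (m + 1)) / 2 ^ (m + 1)) ^ p
  have hb0 : ∀ m, 0 ≤ b m := fun m => Real.rpow_nonneg (div_nonneg (hf0 _) (by positivity)) p
  have hb : Summable b := summable_rpow_div_two_pow hf0 hmono hp0.le hCp
  set A : ℝ := 2 * (((⌈δ⌉₊ + 5) * N : ℕ) : ℝ) * ∑' m, b m
  have hA : 0 ≤ A := by
    have : 0 ≤ ∑' m, b m := tsum_nonneg hb0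
    positivity
  refine ⟨A ^ (1 / p) + 1, by positivity, fun x y => ?_⟩
  set R := ⌈dist x y⌉₊
  have hcoord := tsum_abs_trumpetEmbedding_sub_rpow_le (e := e) hhyp hgeodesic hN hp0 hf0
    (Nat.le_ceil (dist x y))
  have hsum : ∑' (m : ℕ) (z : X),
      |trumpetEmbedding e δ p f x m z - trumpetEmbedding e δ p f y m z| ^ p ≤ A * R ^ p :=
    calc _ ≤ ∑' m, 2 * (((⌈δ⌉₊ + 5) * N : ℕ) : ℝ) * (R : ℝ) ^ p * b m :=
          (Summable.of_nonneg_of_le (fun m => tsum_nonneg fun z => by positivity) hcoord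
            (hb.mul_left _)).tsum_le_tsum hcoord (hb.mul_left _)
      _ = A * R ^ p := by rw [tsum_mul_left]; ring
  calc _ ≤ A ^ (1 / p) * R :=
        rpow_one_div_le_mul_of_le_mul_rpow hp0 (by positivity) hA (by positivity) hsum
    _ ≤ (A ^ (1 / p) + 1) * (dist x y + 1) := by
      gcongr
      · linarith
      · exact (Nat.ceil_lt_add_one dist_nonneg).le
    _ = _ := by ring

/-- Theorem 3.2 (Lipschitz part): for a uniformly discrete δ-hyperbolic graph of bounded
geometry, `p ≥ 1`, and a concave non-decreasing `f` with property (C_p), the map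
`φ(x) = ∑_{n ≥ 1} (f(2^n)/2^{n/p}) H(x,2^n)` is Lipschitz (at large scale):
`‖φ(x) - φ(y)‖_p ≤ L d(x,y) + L`. -/
theorem stmt14 {X : Type*} [MetricSpace X] (δ : ℝ) (hδ : 0 ≤ δ) (e : X) (p : ℝ) (hp : 1 ≤ p)
    (hdiscrete : ∀ a b : X, a ≠ b → 1 ≤ dist a b)
    (hgeodesic : ∀ a b : X, ∃ (γ : ℕ → X) (L : ℕ), IsDGeodesic γ a b L)
    (hbddgeom : ∀ r : ℝ, ∃ N : ℕ, ∀ a : X,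
      (Metric.closedBall a r).Finite ∧ (Metric.closedBall a r).ncard ≤ N)
    (hhyp : DRipsHyperbolic X δ)
    (f : ℕ → ℝ) (hf0 : ∀ n, 0 ≤ f n) (hmono : Monotone f)
    (hconc : ∀ m n : ℕ, m ≤ n → f (n + m) - f n ≤ f n - f (n - m))
    (hCp : Summable (fun n : ℕ => (1 / ((n : ℝ) + 1)) * (f (n + 1) / ((n : ℝ) + 1)) ^ p)) :
    ∃ L : ℝ, 0 < L ∧ ∀ x y : X,
      (∑' (m : ℕ) (z : X),
          |trumpetEmbedding e δ p f x m z - trumpetEmbedding e δ p f y m z| ^ p) ^ (1 / p)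
        ≤ L * dist x y + L :=
  stmt14_general δ e p hp hgeodesic hbddgeom hhyp f hf0 hmono hCp
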